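/- Suppose (θ_n)_{n≥1} is a BMM sequence with surrogates (g_n^i) and optimality gaps (Δ_n) for f started at θ_0, and suppose g_n^i(θ) − f_n^i(θ) ≥ ‖θ − θ_{n−1}^i‖² for all n ≥ 1, i = 1,…,m and θ ∈ E_i. Then for every N ≥ 0: Σ_{n=0}^N Σ_{i=1}^m |⟨∇f_{n+1}^i(θ_{n+1}^i), θ_n^i − θ_{n+1}^i⟩| ≤ ((L_f + 2)/2)·(f(θ_0) − f*) + (L_f/2 + 2)·m·Σ_{n=1}^{N+1} Δ_n, where ∇f_{n+1}^i denotes the gradient of the marginal map f_{n+1}^i on E_i. In particular, if Σ_{n≥1} Δ_n < ∞ then the series Σ_{n=0}^∞ Σ_{i=1}^m |⟨∇f_{n+1}^i(θ_{n+1}^i), θ_n^i − θ_{n+1}^i⟩| converges. -/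

import Mathlib

open Filter RealInnerProductSpace

/-- The point of the product space whose first `i-1` blocks are those of `θ n`, whose
`i`-th block is `v`, and whose remaining blocks are those of `θ (n-1)`.  Thus the `i`-th
marginal objective at cycle `n` is `fun v => f (mixPt θ n i v)`. -/
def mixPt {m : ℕ} {X : Fin m → Type*} (θ : ℕ → ∀ i, X i) (n : ℕ) (i : Fin m)
    (v : X i) : ∀ j, X j :=
  Function.update (fun j => if (j : ℕ) < (i : ℕ) then θ n j else θ (n - 1) j) i v

/-- The gradient `∇ f_n^i (v)` of the `i`-th marginal objective at cycle `n`,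
evaluated at `v : E i`. -/
noncomputable def gradMarg {m : ℕ} {E : Fin m → Type*} [∀ i, NormedAddCommGroup (E i)]
    [∀ i, InnerProductSpace ℝ (E i)] [∀ i, CompleteSpace (E i)]
    (f : (∀ i, E i) → ℝ) (θ : ℕ → ∀ i, E i) (n : ℕ) (i : Fin m) (v : E i) : E i :=
  gradient (fun u => f (mixPt θ n i u)) v

/-- The `i`-th block partial gradient `∇_i f(x)`: the gradient at `x i` of the map
`u ↦ f (x with i-th block replaced by u)`. -/
noncomputable def gradi {m : ℕ} {E : Fin m → Type*} [∀ i, NormedAddCommGroup (E i)]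
    [∀ i, InnerProductSpace ℝ (E i)] [∀ i, CompleteSpace (E i)]
    (f : (∀ i, E i) → ℝ) (x : ∀ i, E i) (i : Fin m) : E i :=
  gradient (fun u => f (Function.update x i u)) (x i)

/-!
Each block update is one majorization–minimization step for the marginal `φ = f_n^i`, from
`a = θ_{n-1}^i` to `b = θ_n^i`. The quadratic gap of the surrogate gives
`‖b - a‖² ≤ φ a - φ b + Δ_n`, and the descent lemma for the `L_f`-Lipschitz gradient of `φ`
gives `|φ a - φ b - ⟪∇φ b, a - b⟫| ≤ (L_f / 2) ‖a - b‖²`. Together they bound the first-order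
term by `(1 + L_f / 2) (φ a - φ b) + (L_f / 2 + 2) Δ_n`. The decrements `φ a - φ b` telescope
over the blocks of a cycle to `f θ_{n-1} - f θ_n`, and then over the cycles to at most
`f θ_0 - f*`.
-/

theorem abs_sub_sub_inner_gradient_le {F : Type*} [NormedAddCommGroup F]
    [InnerProductSpace ℝ F] [CompleteSpace F] {φ : F → ℝ} (hφ : Differentiable ℝ φ) {L : ℝ}
    (hlip : ∀ a b, ‖gradient φ a - gradient φ b‖ ≤ L * ‖a - b‖) (x y : F) :
    |φ y - φ x - ⟪gradient φ x, y - x⟫| ≤ L / 2 * ‖y - x‖ ^ 2 := by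
  set d := y - x
  have hderiv (t : ℝ) : HasDerivAt (fun s : ℝ => φ (x + s • d) - φ x - s * ⟪gradient φ x, d⟫)
      (⟪gradient φ (x + t • d), d⟫ - ⟪gradient φ x, d⟫) t := by
    have hline : HasDerivAt (fun s : ℝ => x + s • d) d t := by
      simpa using ((hasDerivAt_id t).smul_const d).const_add x
    simp only [inner_gradient_left]
    exact (((hφ _).hasFDerivAt.comp_hasDerivAt t hline).sub_const (φ x)).fun_sub
      (by simpa using (hasDerivAt_id t).mul_const (fderiv ℝ φ x d))
  have hbound (t : ℝ) (ht : t ∈ Set.Ico (0 : ℝ) 1) :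
      ‖⟪gradient φ (x + t • d), d⟫ - ⟪gradient φ x, d⟫‖ ≤ L * ‖d‖ ^ 2 * t := by
    rw [← inner_sub_left, Real.norm_eq_abs]
    calc |⟪gradient φ (x + t • d) - gradient φ x, d⟫|
        ≤ ‖gradient φ (x + t • d) - gradient φ x‖ * ‖d‖ := abs_real_inner_le_norm _ _
      _ ≤ L * ‖t • d‖ * ‖d‖ := by
        gcongr
        simpa using hlip (x + t • d) x
      _ = L * ‖d‖ ^ 2 * t := by rw [norm_smul, Real.norm_of_nonneg ht.1]; ring
  have key := image_norm_le_of_norm_deriv_right_le_deriv_boundary (a := 0) (b := 1)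
    (B := fun t => L / 2 * ‖d‖ ^ 2 * t ^ 2)
    (fun t _ => (hderiv t).continuousAt.continuousWithinAt)
    (fun t _ => (hderiv t).hasDerivWithinAt) (by simp)
    (fun t => ((hasDerivAt_pow 2 t).const_mul (L / 2 * ‖d‖ ^ 2)).congr_deriv (by ring)) hbound
    (Set.right_mem_Icc.2 zero_le_one)
  simpa [d] using key

theorem abs_inner_gradient_le_of_surrogate_step {F : Type*} [NormedAddCommGroup F]
    [InnerProductSpace ℝ F] [CompleteSpace F] {φ g : F → ℝ} (hφ : Differentiable ℝ φ)
    {L : ℝ} (hL : 0 ≤ L) (hlip : ∀ a b, ‖gradient φ a - gradient φ b‖ ≤ L * ‖a - b‖)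
    {a b : F} {Δ : ℝ} (hΔ : 0 ≤ Δ) (hgap : ‖b - a‖ ^ 2 ≤ g b - φ b) (hsharp : g a = φ a)
    (hopt : g b ≤ g a + Δ) :
    |⟪gradient φ b, a - b⟫| ≤ (1 + L / 2) * (φ a - φ b) + (L / 2 + 2) * Δ := by
  have hdesc := abs_le.1 (abs_sub_sub_inner_gradient_le hφ hlip b a)
  have hdecrease : ‖a - b‖ ^ 2 ≤ φ a - φ b + Δ := by rw [norm_sub_rev]; linarith
  have hscaled : L / 2 * ‖a - b‖ ^ 2 ≤ L / 2 * (φ a - φ b + Δ) := by gcongr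
  have hsq : 0 ≤ ‖a - b‖ ^ 2 := by positivity
  rw [abs_le]
  constructor <;> linarith

section BlockCoordinates

variable {m : ℕ} {E : Fin m → Type*} [∀ i, NormedAddCommGroup (E i)]
  [∀ i, InnerProductSpace ℝ (E i)]

theorem Differentiable.comp_update {f : (∀ i, E i) → ℝ} (hf : Differentiable ℝ f)
    (x : ∀ i, E i) (i : Fin m) : Differentiable ℝ (fun u => f (Function.update x i u)) :=
  hf.comp fun v => (hasFDerivAt_update x v).differentiableAt

variable [∀ i, CompleteSpace (E i)]

theorem gradient_comp_update (f : (∀ i, E i) → ℝ) (x : ∀ i, E i) (i : Fin m) (v : E i) :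
    gradient (fun u => f (Function.update x i u)) v = gradi f (Function.update x i v) i := by
  simp only [gradi, Function.update_idem, Function.update_self]

theorem norm_gradient_comp_update_sub_le {f : (∀ i, E i) → ℝ} {L : ℝ}
    (hsmooth : ∀ x y : ∀ i, E i,
      Real.sqrt (∑ i, ‖gradi f x i - gradi f y i‖ ^ 2) ≤ L * Real.sqrt (∑ i, ‖x i - y i‖ ^ 2))
    (x : ∀ i, E i) (i : Fin m) (a b : E i) :
    ‖gradient (fun u => f (Function.update x i u)) a
        - gradient (fun u => f (Function.update x i u)) b‖ ≤ L * ‖a - b‖ := by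
  rw [gradient_comp_update, gradient_comp_update]
  set xa := Function.update x i a
  set xb := Function.update x i b
  have hdist : ∑ j, ‖xa j - xb j‖ ^ 2 = ‖a - b‖ ^ 2 := by
    rw [Finset.sum_eq_single_of_mem i (Finset.mem_univ i)]
    · simp [xa, xb]
    · intro j _ hj
      simp [xa, xb, Function.update_of_ne hj]
  calc ‖gradi f xa i - gradi f xb i‖
      ≤ Real.sqrt (∑ j, ‖gradi f xa j - gradi f xb j‖ ^ 2) :=
        Real.le_sqrt_of_sq_le <| Finset.single_le_sum
          (f := fun j => ‖gradi f xa j - gradi f xb j‖ ^ 2) (fun j _ => by positivity)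
          (Finset.mem_univ i)
    _ ≤ L * Real.sqrt (∑ j, ‖xa j - xb j‖ ^ 2) := hsmooth xa xb
    _ = L * ‖a - b‖ := by rw [hdist, Real.sqrt_sq (norm_nonneg _)]

end BlockCoordinates

section Sweep

variable {m : ℕ} {X : Fin m → Type*}

/-- The iterate reached after updating the first `k` blocks during cycle `n`. -/
def sweepPt (θ : ℕ → ∀ i, X i) (n k : ℕ) : ∀ j, X j :=
  fun j => if (j : ℕ) < k then θ n j else θ (n - 1) j

theorem mixPt_eq_update (θ : ℕ → ∀ i, X i) (n : ℕ) (i : Fin m) :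
    mixPt θ n i = Function.update (sweepPt θ n i) i :=
  rfl

theorem mixPt_prev (θ : ℕ → ∀ i, X i) (n : ℕ) (i : Fin m) :
    mixPt θ n i (θ (n - 1) i) = sweepPt θ n i := by
  simp [mixPt_eq_update, sweepPt]

theorem mixPt_self (θ : ℕ → ∀ i, X i) (n : ℕ) (i : Fin m) :
    mixPt θ n i (θ n i) = sweepPt θ n (i + 1) := by
  funext j
  rcases eq_or_ne j i with rfl | hj
  · simp [mixPt_eq_update, sweepPt]
  · have hj' : (j : ℕ) ≠ i := Fin.val_ne_of_ne hj
    simp only [mixPt_eq_update, sweepPt, Function.update_of_ne hj]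
    exact if_congr (by omega) rfl rfl

theorem sum_sub_sweepPt (F : (∀ i, X i) → ℝ) (θ : ℕ → ∀ i, X i) (n : ℕ) :
    ∑ i : Fin m, (F (sweepPt θ n i) - F (sweepPt θ n (i + 1))) = F (θ (n - 1)) - F (θ n) := by
  have hstart : sweepPt θ n 0 = θ (n - 1) := by funext j; simp [sweepPt]
  have hend : sweepPt θ n m = θ n := by funext j; simp [sweepPt]
  rw [Fin.sum_univ_eq_sum_range (fun k => F (sweepPt θ n k) - F (sweepPt θ n (k + 1))),
    Finset.sum_range_sub', hstart, hend]

end Sweep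

theorem sum_range_le_of_le_sub_succ {a b u : ℕ → ℝ} {c d ℓ : ℝ} (hc : 0 ≤ c)
    (hu : ∀ n, ℓ ≤ u n) (h : ∀ n, a n ≤ c * (u n - u (n + 1)) + d * b n) (N : ℕ) :
    ∑ n ∈ Finset.range N, a n ≤ c * (u 0 - ℓ) + d * ∑ n ∈ Finset.range N, b n := by
  calc ∑ n ∈ Finset.range N, a n
      ≤ ∑ n ∈ Finset.range N, (c * (u n - u (n + 1)) + d * b n) :=
        Finset.sum_le_sum fun n _ => h n
    _ = c * (u 0 - u N) + d * ∑ n ∈ Finset.range N, b n := by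
      rw [Finset.sum_add_distrib, ← Finset.mul_sum, ← Finset.mul_sum, Finset.sum_range_sub']
    _ ≤ c * (u 0 - ℓ) + d * ∑ n ∈ Finset.range N, b n := by gcongr; exact hu N

theorem summable_of_le_sub_succ {a b u : ℕ → ℝ} {c d ℓ : ℝ} (hc : 0 ≤ c) (hd : 0 ≤ d)
    (hu : ∀ n, ℓ ≤ u n) (h : ∀ n, a n ≤ c * (u n - u (n + 1)) + d * b n)
    (ha : ∀ n, 0 ≤ a n) (hb : ∀ n, 0 ≤ b n) (hbs : Summable b) : Summable a :=
  summable_of_sum_range_le (c := c * (u 0 - ℓ) + d * ∑' n, b n) ha fun N =>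
    (sum_range_le_of_le_sub_succ hc hu h N).trans
      (by gcongr; exact hbs.sum_le_tsum _ fun n _ => hb n)

theorem bmm_finite_first_order_variation_general {m : ℕ}
    {E : Fin m → Type*} [∀ i, NormedAddCommGroup (E i)]
    [∀ i, InnerProductSpace ℝ (E i)] [∀ i, FiniteDimensional ℝ (E i)]
    (Θ : ∀ i, Set (E i))
    (f : (∀ i, E i) → ℝ) (Lf : ℝ) (hLf : 0 < Lf)
    (hdiff : Differentiable ℝ f)
    (hsmooth : ∀ x y : ∀ i, E i,
      Real.sqrt (∑ i, ‖gradi f x i - gradi f y i‖ ^ 2)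
        ≤ Lf * Real.sqrt (∑ i, ‖x i - y i‖ ^ 2))
    (fstar : ℝ) (hbdd : ∀ x, fstar ≤ f x)
    (θ : ℕ → ∀ i, E i) (hθ : ∀ n i, θ n i ∈ Θ i)
    (g : ℕ → ∀ i : Fin m, E i → ℝ) (Δ : ℕ → ℝ) (hΔ : ∀ n, 1 ≤ n → 0 ≤ Δ n)
    (hsharp : ∀ n, 1 ≤ n → ∀ i, g n i (θ (n - 1) i) = f (mixPt θ n i (θ (n - 1) i)))
    (hopt : ∀ n, 1 ≤ n → ∀ i, ∀ v ∈ Θ i, g n i (θ n i) ≤ g n i v + Δ n)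
    (hgap : ∀ n, 1 ≤ n → ∀ i, ∀ v : E i,
      ‖v - θ (n - 1) i‖ ^ 2 ≤ g n i v - f (mixPt θ n i v)) :
    (∀ N : ℕ,
      ∑ n ∈ Finset.range (N + 1), ∑ i,
          |⟪gradMarg f θ (n + 1) i (θ (n + 1) i), θ n i - θ (n + 1) i⟫|
        ≤ (Lf + 2) / 2 * (f (θ 0) - fstar)
          + (Lf / 2 + 2) * (m : ℝ) * ∑ n ∈ Finset.Icc 1 (N + 1), Δ n)
    ∧ ((Summable fun n => Δ (n + 1)) →
        Summable fun n => ∑ i,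
          |⟪gradMarg f θ (n + 1) i (θ (n + 1) i), θ n i - θ (n + 1) i⟫|) := by
  have hcycle (n : ℕ) : ∑ i, |⟪gradMarg f θ (n + 1) i (θ (n + 1) i), θ n i - θ (n + 1) i⟫|
      ≤ (1 + Lf / 2) * (f (θ n) - f (θ (n + 1))) + (Lf / 2 + 2) * m * Δ (n + 1) := by
    have hblock (i : Fin m) : |⟪gradMarg f θ (n + 1) i (θ (n + 1) i), θ n i - θ (n + 1) i⟫|
        ≤ (1 + Lf / 2) * (f (sweepPt θ (n + 1) i) - f (sweepPt θ (n + 1) (i + 1)))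
          + (Lf / 2 + 2) * Δ (n + 1) := by
      have hstep := abs_inner_gradient_le_of_surrogate_step
        (φ := fun v => f (mixPt θ (n + 1) i v)) (hdiff.comp_update _ i) hLf.le
        (norm_gradient_comp_update_sub_le hsmooth _ i) (hΔ (n + 1) n.succ_pos)
        (hgap (n + 1) n.succ_pos i (θ (n + 1) i)) (hsharp (n + 1) n.succ_pos i)
        (hopt (n + 1) n.succ_pos i _ (hθ n i))
      rwa [mixPt_prev, mixPt_self, Nat.add_sub_cancel] at hstep
    calc _ ≤ ∑ i : Fin m, ((1 + Lf / 2) * (f (sweepPt θ (n + 1) i)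
              - f (sweepPt θ (n + 1) (i + 1))) + (Lf / 2 + 2) * Δ (n + 1)) :=
          Finset.sum_le_sum fun i _ => hblock i
      _ = _ := by
        rw [Finset.sum_add_distrib, ← Finset.mul_sum, sum_sub_sweepPt, Nat.add_sub_cancel,
          Finset.sum_const, Finset.card_univ, Fintype.card_fin, nsmul_eq_mul]
        ring
  have hc : 0 ≤ 1 + Lf / 2 := by positivity
  refine ⟨fun N => ?_, fun hsum => summable_of_le_sub_succ hc (by positivity)
    (fun n => hbdd (θ n)) hcycle (fun n => Finset.sum_nonneg fun i _ => abs_nonneg _)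
    (fun n => hΔ (n + 1) n.succ_pos) hsum⟩
  have hreindex : ∑ n ∈ Finset.Icc 1 (N + 1), Δ n = ∑ n ∈ Finset.range (N + 1), Δ (n + 1) := by
    rw [Finset.range_eq_Ico, Finset.sum_Ico_add', zero_add, Finset.Ico_add_one_right_eq_Icc]
  rw [hreindex, show (Lf + 2) / 2 = 1 + Lf / 2 by ring]
  exact sum_range_le_of_le_sub_succ hc (fun n => hbdd (θ n)) hcycle (N + 1)

/-- finite first-order variation.  For a BMM sequence whose majorization
gaps satisfy `g_n^i(θ) - f_n^i(θ) ≥ ‖θ - θ_{n-1}^i‖²`, for every `N ≥ 0`: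
`∑_{n=0}^N ∑_i |⟪∇f_{n+1}^i(θ_{n+1}^i), θ_n^i - θ_{n+1}^i⟫|
  ≤ ((L_f + 2)/2)(f(θ_0) - f*) + (L_f/2 + 2) m ∑_{n=1}^{N+1} Δ_n`; in particular if
`∑_n Δ_n < ∞` then the full series converges. -/
theorem bmm_finite_first_order_variation {m : ℕ} (hm : 1 ≤ m)
    {E : Fin m → Type*} [∀ i, NormedAddCommGroup (E i)]
    [∀ i, InnerProductSpace ℝ (E i)] [∀ i, FiniteDimensional ℝ (E i)]
    (Θ : ∀ i, Set (E i)) (hne : ∀ i, (Θ i).Nonempty)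
    (hclosed : ∀ i, IsClosed (Θ i)) (hconv : ∀ i, Convex ℝ (Θ i))
    (f : (∀ i, E i) → ℝ) (Lf : ℝ) (hLf : 0 < Lf)
    (hdiff : Differentiable ℝ f)
    (hsmooth : ∀ x y : ∀ i, E i,
      Real.sqrt (∑ i, ‖gradi f x i - gradi f y i‖ ^ 2)
        ≤ Lf * Real.sqrt (∑ i, ‖x i - y i‖ ^ 2))
    (fstar : ℝ) (hbdd : ∀ x, fstar ≤ f x)
    (θ : ℕ → ∀ i, E i) (hθ : ∀ n i, θ n i ∈ Θ i)
    (g : ℕ → ∀ i : Fin m, E i → ℝ) (Δ : ℕ → ℝ) (hΔ : ∀ n, 1 ≤ n → 0 ≤ Δ n)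
    (hmaj : ∀ n, 1 ≤ n → ∀ i, ∀ v : E i, f (mixPt θ n i v) ≤ g n i v)
    (hsharp : ∀ n, 1 ≤ n → ∀ i, g n i (θ (n - 1) i) = f (mixPt θ n i (θ (n - 1) i)))
    (hopt : ∀ n, 1 ≤ n → ∀ i, ∀ v ∈ Θ i, g n i (θ n i) ≤ g n i v + Δ n)
    (hgap : ∀ n, 1 ≤ n → ∀ i, ∀ v : E i,
      ‖v - θ (n - 1) i‖ ^ 2 ≤ g n i v - f (mixPt θ n i v)) :
    (∀ N : ℕ,
      ∑ n ∈ Finset.range (N + 1), ∑ i,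
          |⟪gradMarg f θ (n + 1) i (θ (n + 1) i), θ n i - θ (n + 1) i⟫|
        ≤ (Lf + 2) / 2 * (f (θ 0) - fstar)
          + (Lf / 2 + 2) * (m : ℝ) * ∑ n ∈ Finset.Icc 1 (N + 1), Δ n)
    ∧ ((Summable fun n => Δ (n + 1)) →
        Summable fun n => ∑ i,
          |⟪gradMarg f θ (n + 1) i (θ (n + 1) i), θ n i - θ (n + 1) i⟫|) :=
  bmm_finite_first_order_variation_general Θ f Lf hLf hdiff hsmooth fstar hbdd θ hθ g Δ hΔ hsharp
    hopt hgap
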